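/- arXiv:math/0703438 — 2 statements merged into one kernel-verified Lean document; each statement's English description precedes it below -/
import Mathlib

section
/- Let V ⊂ ℝ^d be a bounded set with 0 in the interior of V and A an expansive d×d real matrix. Set Q = AV \ V. Then ∪_{j∈ℤ} A^j Q = ℝ^d \ {0}, and the covering index of {A^j Q}_{j∈ℤ} is finite. Moreover, if in addition V ⊆ AV, then the sets {A^j Q}_{j∈ℤ} are pairwise disjoint. -/
open MeasureTheory Filter Topology
noncomputable section
abbrev Rd (d : ℕ) := Fin d → ℝ
/-- A real matrix is expansive if all its (complex) eigenvalues have modulus `> 1`. -/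
def Expansive {d : ℕ} (A : Matrix (Fin d) (Fin d) ℝ) : Prop :=
  ∀ μ : ℂ, μ ∈ spectrum ℂ (A.map Complex.ofReal) → 1 < ‖μ‖
/-- The linear action of the integer power `A^j` of `A ∈ GL_d(ℝ)` on `ℝ^d`. -/
def mv {d : ℕ} (A : GL (Fin d) ℝ) (j : ℤ) (x : Rd d) : Rd d :=
  ((A ^ j : GL (Fin d) ℝ) : Matrix (Fin d) (Fin d) ℝ).mulVec x

open scoped NNReal ENNReal

attribute [local instance] Matrix.linftyOpNormedRing Matrix.linftyOpNormedAlgebra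

lemma mv_mv {d : ℕ} (A : GL (Fin d) ℝ) (i j : ℤ) (x : Rd d) :
    mv A i (mv A j x) = mv A (i + j) x := by
  simp only [mv, Matrix.mulVec_mulVec, ← Units.val_mul, ← zpow_add]

lemma mv_zero {d : ℕ} (A : GL (Fin d) ℝ) (x : Rd d) : mv A 0 x = x := by
  simp [mv]

lemma mv_apply_zero {d : ℕ} (A : GL (Fin d) ℝ) (j : ℤ) : mv A j (0 : Rd d) = 0 :=
  Matrix.mulVec_zero _

lemma mem_mv_image {d : ℕ} (A : GL (Fin d) ℝ) (j : ℤ) (S : Set (Rd d)) (x : Rd d) :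
    x ∈ mv A j '' S ↔ mv A (-j) x ∈ S := by
  constructor
  · rintro ⟨y, hy, rfl⟩
    rwa [mv_mv, neg_add_cancel, mv_zero]
  · intro h
    exact ⟨mv A (-j) x, h, by rw [mv_mv, add_neg_cancel, mv_zero]⟩

lemma aux_pow_le {B : Type*} [NormedRing B] [NormedAlgebra ℂ B] [CompleteSpace B]
    (a : B) (h : spectralRadius ℂ a < 1) :
    ∃ ρ C : ℝ, 0 < ρ ∧ ρ < 1 ∧ 0 < C ∧ ∀ n : ℕ, ‖a ^ n‖ ≤ C * ρ ^ n := by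
  obtain ⟨ρ, hρ1, hρ2⟩ := ENNReal.lt_iff_exists_nnreal_btwn.mp h
  have hρpos : 0 < ρ := by
    have h0 : (0 : ℝ≥0∞) < (ρ : ℝ≥0∞) := lt_of_le_of_lt zero_le hρ1
    exact_mod_cast h0
  have hρpos' : (0:ℝ) < (ρ:ℝ) := hρpos
  have hρlt1 : (ρ : ℝ) < 1 := by exact_mod_cast hρ2
  have hgel := spectrum.pow_nnnorm_pow_one_div_tendsto_nhds_spectralRadius a
  have hev : ∀ᶠ n : ℕ in atTop, (‖a ^ n‖₊ : ℝ≥0∞) ^ (1 / (n : ℝ)) < (ρ : ℝ≥0∞) :=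
    hgel.eventually_lt_const hρ1
  obtain ⟨N, hN⟩ := Filter.eventually_atTop.mp (hev.and (Filter.eventually_ge_atTop 1))
  have key : ∀ n, N ≤ n → ‖a ^ n‖ ≤ (ρ : ℝ) ^ n := by
    intro n hn
    obtain ⟨h1, h2⟩ := hN n hn
    have hne : (n : ℝ) ≠ 0 := Nat.cast_ne_zero.mpr (by omega)
    have h3 : ((‖a ^ n‖₊ : ℝ≥0∞) ^ (1 / (n : ℝ))) ^ (n : ℝ) ≤ ((ρ : ℝ≥0∞)) ^ (n : ℝ) :=
      ENNReal.rpow_le_rpow h1.le (by positivity)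
    rw [← ENNReal.rpow_mul, one_div, inv_mul_cancel₀ hne, ENNReal.rpow_one,
        ENNReal.rpow_natCast, ← ENNReal.coe_pow, ENNReal.coe_le_coe] at h3
    calc ‖a ^ n‖ = ((‖a ^ n‖₊ : ℝ≥0) : ℝ) := (coe_nnnorm _).symm
      _ ≤ ((ρ ^ n : ℝ≥0) : ℝ) := by exact_mod_cast h3
      _ = (ρ : ℝ) ^ n := by push_cast; ring
  have hsum0 : (0:ℝ) ≤ ∑ k ∈ Finset.range N, ‖a ^ k‖ / (ρ : ℝ) ^ k :=
    Finset.sum_nonneg fun k _ => by positivity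
  refine ⟨ρ, (∑ k ∈ Finset.range N, ‖a ^ k‖ / (ρ : ℝ) ^ k) + 1, hρpos', hρlt1,
    by linarith, ?_⟩
  intro n
  rcases le_or_gt N n with hn | hn
  · have h := key n hn
    have h2 : (1:ℝ) ≤ (∑ k ∈ Finset.range N, ‖a ^ k‖ / (ρ : ℝ) ^ k) + 1 := by linarith
    calc ‖a ^ n‖ ≤ (ρ : ℝ) ^ n := h
      _ ≤ ((∑ k ∈ Finset.range N, ‖a ^ k‖ / (ρ : ℝ) ^ k) + 1) * (ρ : ℝ) ^ n :=
        le_mul_of_one_le_left (by positivity) h2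
  · have hterm : ‖a ^ n‖ / (ρ : ℝ) ^ n ≤ ∑ k ∈ Finset.range N, ‖a ^ k‖ / (ρ : ℝ) ^ k :=
      Finset.single_le_sum (f := fun k => ‖a ^ k‖ / (ρ : ℝ) ^ k)
        (fun k _ => by positivity) (Finset.mem_range.mpr hn)
    have hpow : (0:ℝ) < (ρ : ℝ) ^ n := by positivity
    have h4 := mul_le_mul_of_nonneg_right
      (hterm.trans (by linarith : (∑ k ∈ Finset.range N, ‖a ^ k‖ / (ρ : ℝ) ^ k) ≤
        (∑ k ∈ Finset.range N, ‖a ^ k‖ / (ρ : ℝ) ^ k) + 1)) hpow.le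
    rwa [div_mul_cancel₀ _ hpow.ne'] at h4

lemma nnnorm_map_ofReal {k : ℕ} (M : Matrix (Fin k) (Fin k) ℝ) :
    ‖M.map Complex.ofReal‖₊ = ‖M‖₊ := by
  simp [Matrix.linfty_opNNNorm_def, Matrix.map_apply]

lemma norm_map_ofReal {k : ℕ} (M : Matrix (Fin k) (Fin k) ℝ) :
    ‖M.map Complex.ofReal‖ = ‖M‖ := by
  rw [← coe_nnnorm, ← coe_nnnorm, nnnorm_map_ofReal]

lemma geom_decay {d : ℕ} (A : GL (Fin d) ℝ)
    (hA : Expansive (A : Matrix (Fin d) (Fin d) ℝ)) :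
    ∃ ρ C : ℝ, 0 < ρ ∧ ρ < 1 ∧ 0 < C ∧
      ∀ (n : ℕ) (x : Rd d), ‖mv A (-(n : ℤ)) x‖ ≤ C * ρ ^ n * ‖x‖ := by
  rcases d with _ | m
  · refine ⟨1/2, 1, by norm_num, by norm_num, by norm_num, fun n x => ?_⟩
    have hx : x = 0 := Subsingleton.elim x 0
    rw [hx, mv_apply_zero, norm_zero]
    positivity
  · set f : Matrix (Fin (m+1)) (Fin (m+1)) ℝ →+* Matrix (Fin (m+1)) (Fin (m+1)) ℂ :=
      RingHom.mapMatrix (algebraMap ℝ ℂ) with hf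
    set Ahat : (Matrix (Fin (m+1)) (Fin (m+1)) ℂ)ˣ := Units.map f.toMonoidHom A with hAhat
    set Bhat : (Matrix (Fin (m+1)) (Fin (m+1)) ℂ)ˣ := Units.map f.toMonoidHom A⁻¹ with hBhat
    have hBA : Bhat = Ahat⁻¹ := by rw [hBhat, hAhat, map_inv]
    have hAcoe : (Ahat : Matrix (Fin (m+1)) (Fin (m+1)) ℂ)
        = (A : Matrix (Fin (m+1)) (Fin (m+1)) ℝ).map Complex.ofReal := by
      ext i j
      simp [hAhat, hf, RingHom.mapMatrix_apply, Matrix.map_apply]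
    have hspec : ∀ z ∈ spectrum ℂ ((Bhat : Matrix (Fin (m+1)) (Fin (m+1)) ℂ)),
        ‖z‖₊ < 1 := by
      intro z hz
      have hz0 : z ≠ 0 := by
        rintro rfl
        exact (spectrum.zero_notMem_iff ℂ).mpr Bhat.isUnit hz
      have hmem := (spectrum.inv_mem_iff (r := Units.mk0 z hz0) (a := Bhat)).mp hz
      rw [hBA, inv_inv] at hmem
      rw [hAcoe] at hmem
      have h1 := hA _ hmem
      simp only [Units.val_inv_eq_inv_val, Units.val_mk0, norm_inv] at h1
      have hzpos : 0 < ‖z‖ := norm_pos_iff.mpr hz0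
      have hlt : ‖z‖ < 1 := by
        have h2 := mul_lt_mul_of_pos_right h1 hzpos
        rwa [one_mul, inv_mul_cancel₀ hzpos.ne'] at h2
      exact_mod_cast hlt
    have hrad : spectralRadius ℂ ((Bhat : Matrix (Fin (m+1)) (Fin (m+1)) ℂ)) < 1 := by
      have h := spectrum.spectralRadius_lt_of_forall_lt _ hspec
      simpa using h
    obtain ⟨ρ, C, hρ0, hρ1, hC0, hbound⟩ := aux_pow_le _ hrad
    have hpowrw : ∀ n : ℕ, ((Bhat : Matrix (Fin (m+1)) (Fin (m+1)) ℂ)) ^ n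
        = ((((A⁻¹ : GL (Fin (m+1)) ℝ) : Matrix (Fin (m+1)) (Fin (m+1)) ℝ)) ^ n).map
            Complex.ofReal := by
      intro n
      have h1 : (Bhat : Matrix (Fin (m+1)) (Fin (m+1)) ℂ)
          = f ((A⁻¹ : GL (Fin (m+1)) ℝ) : Matrix (Fin (m+1)) (Fin (m+1)) ℝ) := by
        rw [hBhat]; rfl
      rw [h1, ← map_pow f]
      ext i j
      simp [hf, RingHom.mapMatrix_apply, Matrix.map_apply]
    have key : ∀ n : ℕ,
        ‖(((A⁻¹ : GL (Fin (m+1)) ℝ) : Matrix (Fin (m+1)) (Fin (m+1)) ℝ)) ^ n‖ ≤ C * ρ ^ n := by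
      intro n
      have h := hbound n
      rwa [hpowrw n, norm_map_ofReal] at h
    refine ⟨ρ, C, hρ0, hρ1, hC0, ?_⟩
    intro n x
    have hmv : mv A (-(n : ℤ)) x
        = ((((A⁻¹ : GL (Fin (m+1)) ℝ) : Matrix (Fin (m+1)) (Fin (m+1)) ℝ)) ^ n).mulVec x := by
      rw [mv]
      congr 1
      rw [zpow_neg, zpow_natCast, ← inv_pow, ← Units.val_pow_eq_pow_val]
    rw [hmv]
    calc ‖_‖ ≤ ‖(((A⁻¹ : GL (Fin (m+1)) ℝ) : Matrix (Fin (m+1)) (Fin (m+1)) ℝ)) ^ n‖ * ‖x‖ :=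
          Matrix.linfty_opNorm_mulVec _ _
      _ ≤ C * ρ ^ n * ‖x‖ := mul_le_mul_of_nonneg_right (key n) (norm_nonneg x)

/-- Lemma: for `V` bounded with `0 ∈ V°` and `A` expansive, `Q = AV \ V` satisfies
`∪_j A^j Q = ℝ^d \ {0}` with finite covering index, and if moreover `V ⊆ AV` then
the sets `A^j Q` are pairwise disjoint. -/
theorem stmt11 {d : ℕ} (A : GL (Fin d) ℝ)
    (hA : Expansive (A : Matrix (Fin d) (Fin d) ℝ))
    (V : Set (Rd d)) (hVb : Bornology.IsBounded V) (h0 : (0 : Rd d) ∈ interior V) :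
    (⋃ j : ℤ, mv A j '' (mv A 1 '' V \ V)) = {x : Rd d | x ≠ 0} ∧
    (∃ n : ℕ, 1 ≤ n ∧ ∀ x : Rd d,
      {j : ℤ | x ∈ mv A j '' (mv A 1 '' V \ V)}.Finite ∧
      {j : ℤ | x ∈ mv A j '' (mv A 1 '' V \ V)}.ncard ≤ n) ∧
    (V ⊆ mv A 1 '' V → ∀ i j : ℤ, i ≠ j →
      mv A i '' (mv A 1 '' V \ V) ∩ mv A j '' (mv A 1 '' V \ V) = ∅) := by
  obtain ⟨ρ, C, hρ0, hρ1, hC0, hgeom⟩ := geom_decay A hA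
  have h0V : (0 : Rd d) ∈ V := interior_subset h0
  obtain ⟨r, hr0, hball⟩ : ∃ r > 0, Metric.ball (0 : Rd d) r ⊆ V := by
    rcases Metric.mem_nhds_iff.mp (mem_interior_iff_mem_nhds.mp h0) with ⟨r, hr, h⟩
    exact ⟨r, hr, h⟩
  obtain ⟨R₀, hR₀⟩ := hVb.exists_norm_le
  set R : ℝ := max R₀ 1 with hRdef
  have hR1 : (1:ℝ) ≤ R := le_max_right _ _
  have hR0 : (0:ℝ) < R := lt_of_lt_of_le one_pos hR1
  have hR : ∀ y ∈ V, ‖y‖ ≤ R := fun y hy => (hR₀ y hy).trans (le_max_left _ _)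
  have hmem : ∀ (x : Rd d) (j : ℤ), x ∈ mv A j '' (mv A 1 '' V \ V) ↔
      (mv A (-(j+1)) x ∈ V ∧ mv A (-j) x ∉ V) := by
    intro x j
    rw [mem_mv_image, Set.mem_diff, mem_mv_image, mv_mv]
    constructor
    · rintro ⟨h1, h2⟩
      refine ⟨?_, h2⟩
      rwa [(by ring : (-1 : ℤ) + -j = -(j+1))] at h1
    · rintro ⟨h1, h2⟩
      exact ⟨by rwa [(by ring : (-1 : ℤ) + -j = -(j+1))], h2⟩
  have hgeo0 : Tendsto (fun n : ℕ => C * ρ ^ n) atTop (𝓝 0) := by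
    simpa using (tendsto_pow_atTop_nhds_zero_of_lt_one hρ0.le hρ1).const_mul C
  have hforward : ∀ (x : Rd d) (n : ℕ), ‖x‖ ≤ C * ρ ^ n * ‖mv A (n : ℤ) x‖ := by
    intro x n
    have h := hgeom n (mv A (n : ℤ) x)
    rwa [mv_mv, neg_add_cancel, mv_zero] at h
  -- Part 1
  have part1 : (⋃ j : ℤ, mv A j '' (mv A 1 '' V \ V)) = {x : Rd d | x ≠ 0} := by
    ext x
    simp only [Set.mem_iUnion, Set.mem_setOf_eq]
    constructor
    · rintro ⟨j, hj⟩
      rw [hmem] at hj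
      intro hx0
      apply hj.2
      rw [hx0, mv_apply_zero]
      exact h0V
    · intro hx
      have hxpos : 0 < ‖x‖ := norm_pos_iff.mpr hx
      obtain ⟨N1, hN1⟩ : ∃ N1 : ℕ, ∀ n : ℕ, N1 ≤ n → C * ρ ^ n * ‖x‖ < r := by
        have ht : Tendsto (fun n : ℕ => C * ρ ^ n * ‖x‖) atTop (𝓝 0) := by
          simpa using hgeo0.mul_const ‖x‖
        exact Filter.eventually_atTop.mp (ht.eventually_lt_const hr0)
      have hin : ∀ k : ℤ, (N1 : ℤ) ≤ k → mv A (-k) x ∈ V := by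
        intro k hk
        have hk0 : (0:ℤ) ≤ k := le_trans (Int.ofNat_nonneg N1) hk
        lift k to ℕ using hk0 with n
        apply hball
        rw [mem_ball_zero_iff]
        calc ‖mv A (-(n : ℤ)) x‖ ≤ C * ρ ^ n * ‖x‖ := hgeom n x
          _ < r := hN1 n (by exact_mod_cast hk)
      obtain ⟨N2, hN2⟩ : ∃ N2 : ℕ, C * ρ ^ N2 * R < ‖x‖ := by
        have ht : Tendsto (fun n : ℕ => C * ρ ^ n * R) atTop (𝓝 0) := by
          simpa using hgeo0.mul_const R
        exact (ht.eventually_lt_const hxpos).exists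
      have hout : mv A ((N2 : ℤ)) x ∉ V := by
        intro hmem'
        have h1 : ‖mv A ((N2 : ℤ)) x‖ ≤ R := hR _ hmem'
        have h2 := hforward x N2
        have h3 : ‖x‖ ≤ C * ρ ^ N2 * R :=
          h2.trans (mul_le_mul_of_nonneg_left h1 (by positivity))
        linarith
      obtain ⟨j, hjS, hjmax⟩ := Int.exists_greatest_of_bdd
        (P := fun k => mv A (-k) x ∉ V)
        ⟨N1, fun z hz => by
          by_contra hzle
          push_neg at hzle
          exact hz (hin z hzle.le)⟩
        ⟨-(N2 : ℤ), by simpa using hout⟩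
      refine ⟨j, (hmem x j).mpr ⟨?_, hjS⟩⟩
      by_contra hj1
      exact absurd (hjmax (j+1) hj1) (by omega)
  -- Part 2
  obtain ⟨KA, hKA1, hKA⟩ : ∃ KA : ℝ, 1 ≤ KA ∧ ∀ y : Rd d, ‖mv A 1 y‖ ≤ KA * ‖y‖ := by
    refine ⟨‖((A ^ (1:ℤ) : GL (Fin d) ℝ) : Matrix (Fin d) (Fin d) ℝ)‖ + 1,
      by linarith [norm_nonneg ((A ^ (1:ℤ) : GL (Fin d) ℝ) : Matrix (Fin d) (Fin d) ℝ)], ?_⟩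
    intro y
    calc ‖mv A 1 y‖ ≤ ‖((A ^ (1:ℤ) : GL (Fin d) ℝ) : Matrix (Fin d) (Fin d) ℝ)‖ * ‖y‖ :=
          Matrix.linfty_opNorm_mulVec _ _
      _ ≤ _ := mul_le_mul_of_nonneg_right (by linarith) (norm_nonneg y)
  have hKA0 : (0:ℝ) < KA := lt_of_lt_of_le one_pos hKA1
  obtain ⟨M, hM⟩ : ∃ M : ℕ, C * ρ ^ M * (KA * R) < r := by
    have ht : Tendsto (fun n : ℕ => C * ρ ^ n * (KA * R)) atTop (𝓝 0) := by
      simpa using hgeo0.mul_const (KA * R)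
    exact (ht.eventually_lt_const hr0).exists
  have hgap : ∀ (x : Rd d) (i j : ℤ), x ∈ mv A i '' (mv A 1 '' V \ V) →
      x ∈ mv A j '' (mv A 1 '' V \ V) → i ≤ j → j ≤ i + M := by
    intro x i j hi hj hij
    rw [hmem] at hi hj
    by_contra hlt
    push_neg at hlt
    have h1 : r ≤ ‖mv A (-j) x‖ := by
      by_contra h
      push_neg at h
      exact hj.2 (hball (mem_ball_zero_iff.mpr h))
    have h2 : ‖mv A (-i) x‖ ≤ KA * R := by
      have heq : mv A (-i) x = mv A 1 (mv A (-(i+1)) x) := by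
        rw [mv_mv]
        congr 1
        ring
      rw [heq]
      calc ‖mv A 1 (mv A (-(i+1)) x)‖ ≤ KA * ‖mv A (-(i+1)) x‖ := hKA _
        _ ≤ KA * R := mul_le_mul_of_nonneg_left (hR _ hi.1) hKA0.le
    obtain ⟨n, hn⟩ : ∃ n : ℕ, (n : ℤ) = j - i := ⟨(j - i).toNat, by omega⟩
    have hnM : M < n := by omega
    have h3 : mv A (-(n : ℤ)) (mv A (-i) x) = mv A (-j) x := by
      rw [mv_mv]
      have hidx : -(n : ℤ) + -i = -j := by omega
      rw [hidx]
    have h4 : ‖mv A (-j) x‖ ≤ C * ρ ^ n * (KA * R) := by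
      rw [← h3]
      calc ‖mv A (-(n:ℤ)) (mv A (-i) x)‖ ≤ C * ρ ^ n * ‖mv A (-i) x‖ := hgeom n _
        _ ≤ C * ρ ^ n * (KA * R) := mul_le_mul_of_nonneg_left h2 (by positivity)
    have h5 : C * ρ ^ n * (KA * R) ≤ C * ρ ^ M * (KA * R) := by
      apply mul_le_mul_of_nonneg_right _ (by positivity)
      exact mul_le_mul_of_nonneg_left
        (pow_le_pow_of_le_one hρ0.le hρ1.le hnM.le) hC0.le
    linarith
  have part2 : ∃ n : ℕ, 1 ≤ n ∧ ∀ x : Rd d,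
      {j : ℤ | x ∈ mv A j '' (mv A 1 '' V \ V)}.Finite ∧
      {j : ℤ | x ∈ mv A j '' (mv A 1 '' V \ V)}.ncard ≤ n := by
    refine ⟨2*M+1, by omega, fun x => ?_⟩
    by_cases hne : {j : ℤ | x ∈ mv A j '' (mv A 1 '' V \ V)}.Nonempty
    · obtain ⟨i0, hi0⟩ := hne
      have hsub : {j : ℤ | x ∈ mv A j '' (mv A 1 '' V \ V)} ⊆
          Set.Icc (i0 - M) (i0 + M) := by
        intro j hj
        simp only [Set.mem_Icc]
        rcases le_total i0 j with h | h
        · have := hgap x i0 j hi0 hj h; omega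
        · have := hgap x j i0 hj hi0 h; omega
      have hfin := (Set.finite_Icc (i0 - (M:ℤ)) (i0 + M)).subset hsub
      refine ⟨hfin, ?_⟩
      calc {j : ℤ | x ∈ mv A j '' (mv A 1 '' V \ V)}.ncard
          ≤ (Set.Icc (i0 - (M:ℤ)) (i0 + M)).ncard :=
            Set.ncard_le_ncard hsub (Set.finite_Icc _ _)
        _ = 2*M+1 := by
            rw [← Finset.coe_Icc, Set.ncard_coe_finset, Int.card_Icc]
            omega
    · rw [Set.not_nonempty_iff_eq_empty] at hne
      rw [hne]
      exact ⟨Set.finite_empty, by simp⟩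
  -- Part 3
  have part3 : V ⊆ mv A 1 '' V → ∀ i j : ℤ, i ≠ j →
      mv A i '' (mv A 1 '' V \ V) ∩ mv A j '' (mv A 1 '' V \ V) = ∅ := by
    intro hVA i j hij
    have step : ∀ (x : Rd d) (k : ℤ), mv A (-k) x ∈ V → mv A (-(k+1)) x ∈ V := by
      intro x k hk
      have h := hVA hk
      rw [mem_mv_image, mv_mv] at h
      rwa [(by ring : (-1 : ℤ) + -k = -(k+1))] at h
    have aux : ∀ i j : ℤ, i < j → ∀ x : Rd d, x ∈ mv A i '' (mv A 1 '' V \ V) →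
        x ∈ mv A j '' (mv A 1 '' V \ V) → False := by
      intro i j hlt x hi hj
      rw [hmem] at hi hj
      have hiter : ∀ m : ℕ, mv A (-(i + 1 + (m : ℤ))) x ∈ V := by
        intro m
        induction m with
        | zero => simpa using hi.1
        | succ p ih =>
          have h := step x (i + 1 + (p : ℤ)) ih
          have heq : (-(i + 1 + ((p+1 : ℕ) : ℤ))) = -(i + 1 + (p : ℤ) + 1) := by
            push_cast; ring
          rw [heq]
          exact h
      have h := hiter (j - (i + 1)).toNat
      have hj' : (i + 1 + (((j - (i + 1)).toNat : ℕ) : ℤ)) = j := by omega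
      rw [hj'] at h
      exact hj.2 h
    rcases lt_or_gt_of_ne hij with h | h
    · rw [Set.eq_empty_iff_forall_notMem]
      rintro x ⟨h1, h2⟩
      exact aux i j h x h1 h2
    · rw [Set.eq_empty_iff_forall_notMem]
      rintro x ⟨h1, h2⟩
      exact aux j i h x h2 h1
  exact ⟨part1, part2, part3⟩
end
end

section
/- Let {S_j}_{j∈J} be a covering of ℝ^d by sets of positive finite measure, and {h_j}_{j∈J} a Riesz partition of unity with bounds p, P such that supp h_j ⊆ S_j. Suppose for each j, {μ(S_j)^{-1/2} e_{x_{j,k}} χ_{S_j}}_{k∈K} is a frame for K_{S_j} with bounds m_j, M_j, where m := inf_j m_j > 0 and M := sup_j M_j < ∞. Then {μ(S_j)^{-1/2} h_j e_{x_{j,k}} : j ∈ J, k ∈ K} is a frame for L²(ℝ^d) with frame bounds mp and MP. -/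
open MeasureTheory Filter Topology Classical
noncomputable section
abbrev L2 (d : ℕ) := Lp ℂ 2 (volume : Measure (Rd d))
/-- `K_Q`: elements of `L²(ℝ^d)` supported (a.e.) in the closure of `Q`. -/
def Ksp {d : ℕ} (Q : Set (Rd d)) : Set (L2 d) :=
  {f | ∀ᵐ x ∂(volume : Measure (Rd d)), x ∉ closure Q → f x = 0}
/-- `g` is a frame for the subset `F` of `L²(ℝ^d)` with bounds `m`, `M`. -/
def IsFrameWith {d : ℕ} {J : Type*} (g : J → L2 d) (F : Set (L2 d)) (m M : ℝ) : Prop :=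
  (∀ j, g j ∈ F) ∧
  ∀ f ∈ F, m * ‖f‖ ^ 2 ≤ ∑' j, ‖(inner ℂ f (g j) : ℂ)‖ ^ 2 ∧
    (∑' j, ‖(inner ℂ f (g j) : ℂ)‖ ^ 2) ≤ M * ‖f‖ ^ 2

/-! Localize `f ∈ L²` to the pieces `f · conj h_j ∈ K_{S_j}`. Because `h_j` vanishes off `S_j`,
`⟨f, μ(S_j)^{-1/2} h_j e_{x_{j,k}}⟩ = ⟨f · conj h_j, μ(S_j)^{-1/2} e_{x_{j,k}} χ_{S_j}⟩`, so the
local frame bounds put the `j`-th fiber of the frame sum between `m ‖f · conj h_j‖²` and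
`M ‖f · conj h_j‖²`. Finally `∑_j ‖f · conj h_j‖² = ∫ |f|² ∑_j |h_j|²` lies between `p ‖f‖²` and
`P ‖f‖²` by the Riesz partition bounds. -/

open scoped ENNReal ComplexConjugate

lemma summable_of_pos_le_tsum {ι : Type*} {a : ι → ℝ} {p : ℝ} (hp : 0 < p)
    (h : p ≤ ∑' i, a i) : Summable a := by
  by_contra hs
  rw [tsum_eq_zero_of_not_summable hs] at h
  exact h.not_gt hp

section RieszPartition

variable {α ι 𝕜 : Type*} [MeasurableSpace α] {μ : Measure α} [RCLike 𝕜]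

-- Summability is built in: `∑'` of a non-summable family is `0`.
def IsRieszPartition (φ : ι → α → 𝕜) (p P : ℝ) (μ : Measure α) : Prop :=
  ∀ᵐ x ∂μ, Summable (fun i => ‖φ i x‖ ^ 2) ∧
    p ≤ ∑' i, ‖φ i x‖ ^ 2 ∧ ∑' i, ‖φ i x‖ ^ 2 ≤ P

variable {φ : ι → α → 𝕜} {p P : ℝ}

lemma IsRieszPartition.of_ae_le_tsum (hp : 0 < p)
    (h : ∀ᵐ x ∂μ, p ≤ ∑' i, ‖φ i x‖ ^ 2 ∧ ∑' i, ‖φ i x‖ ^ 2 ≤ P) :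
    IsRieszPartition φ p P μ :=
  h.mono fun _ hx => ⟨summable_of_pos_le_tsum hp hx.1, hx⟩

lemma IsRieszPartition.le [NeZero μ] (hφ : IsRieszPartition φ p P μ) : p ≤ P :=
  let ⟨_, _, hp, hP⟩ := hφ.exists
  hp.trans hP

lemma IsRieszPartition.norm_le (hφ : IsRieszPartition φ p P μ) (i : ι) :
    ∀ᵐ x ∂μ, ‖φ i x‖ ≤ √P :=
  hφ.mono fun _ ⟨hs, _, hP⟩ =>
    Real.le_sqrt_of_sq_le ((hs.le_tsum i fun _ _ => sq_nonneg _).trans hP)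

lemma IsRieszPartition.memLp_mul_conj {q : ℝ≥0∞} {f : α → 𝕜} (hφ : IsRieszPartition φ p P μ)
    {i : ι} (hφi : AEStronglyMeasurable (φ i) μ) (hf : MemLp f q μ) :
    MemLp (fun x => f x * conj (φ i x)) q μ := by
  refine hf.of_le_mul (c := √P) (hf.1.mul hφi.star) ((hφ.norm_le i).mono fun x hx => ?_)
  rw [norm_mul, RCLike.norm_conj, mul_comm]
  exact mul_le_mul_of_nonneg_right hx (norm_nonneg _)

lemma ofReal_norm_sq_eq_lintegral (g : Lp 𝕜 2 μ) :
    ENNReal.ofReal (‖g‖ ^ 2) = ∫⁻ x, ‖g x‖ₑ ^ 2 ∂μ := by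
  rw [ENNReal.ofReal_pow (norm_nonneg _), ofReal_norm, Lp.enorm_def]
  simpa using eLpNorm_nnreal_pow_eq_lintegral (f := g) (μ := μ) (p := 2) two_ne_zero

lemma tsum_ofReal_norm_sq_eq_lintegral [Countable ι] {f : Lp 𝕜 2 μ} {g : ι → Lp 𝕜 2 μ}
    (hφm : ∀ i, AEMeasurable (φ i) μ) (hg : ∀ i, g i =ᵐ[μ] fun x => f x * conj (φ i x)) :
    ∑' i, ENNReal.ofReal (‖g i‖ ^ 2) = ∫⁻ x, ‖f x‖ₑ ^ 2 * ∑' i, ‖φ i x‖ₑ ^ 2 ∂μ := by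
  have hgi : ∀ i, ENNReal.ofReal (‖g i‖ ^ 2) = ∫⁻ x, ‖f x‖ₑ ^ 2 * ‖φ i x‖ₑ ^ 2 ∂μ := fun i => by
    rw [ofReal_norm_sq_eq_lintegral]
    refine lintegral_congr_ae ((hg i).mono fun x hx => ?_)
    simp only [hx, enorm_mul, RCLike.enorm_conj, mul_pow]
  simp_rw [hgi, ← ENNReal.tsum_mul_left]
  refine (lintegral_tsum fun i => ?_).symm
  exact (Lp.aestronglyMeasurable f).enorm.pow_const 2 |>.mul ((hφm i).enorm.pow_const 2)

lemma IsRieszPartition.ae_tsum_enorm_sq_bounds (hφ : IsRieszPartition φ p P μ) :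
    ∀ᵐ x ∂μ, ENNReal.ofReal p ≤ ∑' i, ‖φ i x‖ₑ ^ 2 ∧ ∑' i, ‖φ i x‖ₑ ^ 2 ≤ ENNReal.ofReal P :=
  hφ.mono fun x ⟨hs, hp, hP⟩ => by
    have : ∑' i, ‖φ i x‖ₑ ^ 2 = ENNReal.ofReal (∑' i, ‖φ i x‖ ^ 2) := by
      simp [ENNReal.ofReal_tsum_of_nonneg (fun _ => sq_nonneg _) hs, ENNReal.ofReal_pow]
    rw [this]
    exact ⟨ENNReal.ofReal_le_ofReal hp, ENNReal.ofReal_le_ofReal hP⟩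

lemma IsRieszPartition.tsum_norm_sq_bounds [Countable ι] (hφ : IsRieszPartition φ p P μ)
    (hP : 0 ≤ P) (hφm : ∀ i, AEMeasurable (φ i) μ) {f : Lp 𝕜 2 μ} {g : ι → Lp 𝕜 2 μ}
    (hg : ∀ i, g i =ᵐ[μ] fun x => f x * conj (φ i x)) :
    Summable (fun i => ‖g i‖ ^ 2) ∧
      p * ‖f‖ ^ 2 ≤ ∑' i, ‖g i‖ ^ 2 ∧ ∑' i, ‖g i‖ ^ 2 ≤ P * ‖f‖ ^ 2 := by
  have hφe := hφ.ae_tsum_enorm_sq_bounds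
  have hsum := tsum_ofReal_norm_sq_eq_lintegral hφm hg
  have hup : ∑' i, ENNReal.ofReal (‖g i‖ ^ 2) ≤ ENNReal.ofReal (P * ‖f‖ ^ 2) := by
    rw [hsum, ENNReal.ofReal_mul hP, ofReal_norm_sq_eq_lintegral,
      ← lintegral_const_mul' _ _ ENNReal.ofReal_ne_top]
    refine lintegral_mono_ae (hφe.mono fun x hx => ?_)
    rw [mul_comm (ENNReal.ofReal P)]
    gcongr
    exact hx.2
  have hlow : ENNReal.ofReal (p * ‖f‖ ^ 2) ≤ ∑' i, ENNReal.ofReal (‖g i‖ ^ 2) := by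
    rw [hsum, ENNReal.ofReal_mul' (sq_nonneg _), ofReal_norm_sq_eq_lintegral,
      ← lintegral_const_mul' _ _ ENNReal.ofReal_ne_top]
    refine lintegral_mono_ae (hφe.mono fun x hx => ?_)
    rw [mul_comm (ENNReal.ofReal p)]
    gcongr
    exact hx.1
  have hs : Summable fun i => ‖g i‖ ^ 2 := by
    simpa using ENNReal.summable_toReal (ne_top_of_le_ne_top ENNReal.ofReal_ne_top hup)
  rw [← ENNReal.ofReal_tsum_of_nonneg (fun _ => sq_nonneg _) hs] at hup hlow
  exact ⟨hs, (ENNReal.ofReal_le_ofReal_iff (tsum_nonneg fun _ => sq_nonneg _)).1 hlow,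
    (ENNReal.ofReal_le_ofReal_iff (mul_nonneg hP (sq_nonneg _))).1 hup⟩

end RieszPartition

lemma tsum_prod_bounds_of_fiberwise {ι κ : Type*} {a : ι → ℝ} {c : ι → κ → ℝ} {m M p P F : ℝ}
    (hm : 0 < m) (hp : 0 < p) (hF : 0 ≤ F) (ha0 : ∀ i, 0 ≤ a i) (ha : Summable a)
    (haF : p * F ≤ ∑' i, a i ∧ ∑' i, a i ≤ P * F) (hc0 : ∀ i k, 0 ≤ c i k)
    (hc : ∀ i, Summable (c i)) (hca : ∀ i, m * a i ≤ ∑' k, c i k ∧ ∑' k, c i k ≤ M * a i) :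
    m * p * F ≤ ∑' x : ι × κ, c x.1 x.2 ∧ ∑' x : ι × κ, c x.1 x.2 ≤ M * P * F := by
  have hfib : Summable fun i => ∑' k, c i k :=
    (ha.mul_left |M|).of_nonneg_of_le (fun i => tsum_nonneg (hc0 i))
      fun i => (hca i).2.trans (mul_le_mul_of_nonneg_right (le_abs_self M) (ha0 i))
  have hs : Summable fun x : ι × κ => c x.1 x.2 :=
    (summable_prod_of_nonneg fun x => hc0 x.1 x.2).2 ⟨hc, hfib⟩
  have hlow : m * ∑' i, a i ≤ ∑' i, ∑' k, c i k := by
    rw [← tsum_mul_left]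
    exact ha.mul_left m |>.tsum_le_tsum (fun i => (hca i).1) hfib
  have hup : ∑' i, ∑' k, c i k ≤ M * ∑' i, a i := by
    rw [← tsum_mul_left]
    exact hfib.tsum_le_tsum (fun i => (hca i).2) (ha.mul_left M)
  rw [hs.tsum_prod]
  refine ⟨by nlinarith, ?_⟩
  -- If `M < 0`, the fiberwise bounds force every `a i` to vanish, hence `F = 0`.
  rcases le_or_gt 0 M with hM | hM
  · nlinarith
  · have ha_zero : ∑' i, a i = 0 := by nlinarith [(tsum_nonneg ha0 : 0 ≤ ∑' i, a i)]
    have hF0 : F = 0 := by nlinarith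
    simp only [ha_zero, mul_zero, hF0] at hup ⊢
    exact hup

section Frames

variable {d : ℕ} {J : Type*} {g : J → L2 d} {F : Set (L2 d)} {m M : ℝ}

lemma IsFrameWith.mono {m' M' : ℝ} (hg : IsFrameWith g F m M) (hm : m' ≤ m) (hM : M ≤ M') :
    IsFrameWith g F m' M' :=
  ⟨hg.1, fun f hf => ⟨(mul_le_mul_of_nonneg_right hm (sq_nonneg _)).trans (hg.2 f hf).1,
    (hg.2 f hf).2.trans (mul_le_mul_of_nonneg_right hM (sq_nonneg _))⟩⟩

lemma IsFrameWith.summable (hg : IsFrameWith g F m M) (hm : 0 < m) {f : L2 d} (hf : f ∈ F) :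
    Summable fun j => ‖(inner ℂ f (g j) : ℂ)‖ ^ 2 := by
  rcases eq_or_ne f 0 with rfl | hf0
  · simp
  · exact summable_of_pos_le_tsum (by positivity) (hg.2 f hf).1

end Frames

lemma mem_Ksp_of_ae_eq_mul_conj {d : ℕ} {Q : Set (Rd d)} {φ : Rd d → ℂ} {f g : L2 d}
    (hφ : Function.support φ ⊆ Q) (hg : g =ᵐ[volume] fun x => f x * conj (φ x)) : g ∈ Ksp Q :=
  hg.mono fun x hx hxQ => by
    simp only [hx, Function.notMem_support.mp fun h => hxQ (subset_closure (hφ h)), map_zero,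
      mul_zero]

lemma inner_eq_inner_mul_conj {α 𝕜 : Type*} [MeasurableSpace α] {μ : Measure α} [RCLike 𝕜]
    {Q : Set α} {φ u : α → 𝕜} {f g G E : Lp 𝕜 2 μ} (hφ : Function.support φ ⊆ Q)
    (hg : g =ᵐ[μ] fun x => f x * conj (φ x)) (hE : ∀ᵐ x ∂μ, E x = if x ∈ Q then u x else 0)
    (hG : ∀ᵐ x ∂μ, G x = φ x * u x) :
    inner 𝕜 f G = inner 𝕜 g E := by
  rw [L2.inner_def, L2.inner_def]
  refine integral_congr_ae ?_
  filter_upwards [hg, hE, hG] with x hgx hEx hGx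
  simp only [RCLike.inner_apply', hgx, hEx, hGx]
  split_ifs with hx
  · simp only [map_mul, RCLike.conj_conj]
    ring
  · simp [Function.notMem_support.mp fun h => hx (hφ h)]

theorem stmt14_general {d : ℕ} {J K : Type*} [Countable J]
    (S : J → Set (Rd d))
    (h : J → Rd d → ℂ) (hmeas : ∀ j, Measurable (h j))
    (hsupp : ∀ j, Function.support (h j) ⊆ S j)
    (p P m M : ℝ) (hp : 0 < p) (hm : 0 < m)
    (hRPU : ∀ᵐ ξ ∂(volume : Measure (Rd d)),
      p ≤ ∑' j, ‖h j ξ‖ ^ 2 ∧ (∑' j, ‖h j ξ‖ ^ 2) ≤ P)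
    (x : J → K → Rd d) (mj Mj : J → ℝ)
    (hmj : ∀ j, m ≤ mj j) (hMj : ∀ j, Mj j ≤ M)
    (E : J → K → L2 d)
    (hE : ∀ j k, ∀ᵐ ξ ∂(volume : Measure (Rd d)),
      E j k ξ = if ξ ∈ S j then
        ((Real.sqrt (volume (S j)).toReal)⁻¹ : ℂ) *
          Complex.exp (-2 * Real.pi * Complex.I * ((∑ i, x j k i * ξ i : ℝ) : ℂ))
        else 0)
    (hEframe : ∀ j, IsFrameWith (E j) (Ksp (S j)) (mj j) (Mj j))
    (G : J × K → L2 d)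
    (hG : ∀ j k, ∀ᵐ ξ ∂(volume : Measure (Rd d)),
      G (j, k) ξ = ((Real.sqrt (volume (S j)).toReal)⁻¹ : ℂ) * h j ξ *
        Complex.exp (-2 * Real.pi * Complex.I * ((∑ i, x j k i * ξ i : ℝ) : ℂ))) :
    IsFrameWith G (Set.univ : Set (L2 d)) (m * p) (M * P) := by
  have hh : IsRieszPartition h p P volume := .of_ae_le_tsum hp hRPU
  have hframe : ∀ j, IsFrameWith (E j) (Ksp (S j)) m M :=
    fun j => (hEframe j).mono (hmj j) (hMj j)
  refine ⟨fun _ => trivial, fun f _ => ?_⟩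
  let g j : L2 d := (hh.memLp_mul_conj (hmeas j).aestronglyMeasurable (Lp.memLp f)).toLp
  have hg : ∀ j, g j =ᵐ[volume] fun ξ => f ξ * conj (h j ξ) := fun j => MemLp.coeFn_toLp _
  have hgS : ∀ j, g j ∈ Ksp (S j) := fun j => mem_Ksp_of_ae_eq_mul_conj (hsupp j) (hg j)
  have hinner : ∀ jk : J × K, inner ℂ f (G jk) = inner ℂ (g jk.1) (E jk.1 jk.2) :=
    fun ⟨j, k⟩ => inner_eq_inner_mul_conj (hsupp j) (hg j) (hE j k)
      ((hG j k).mono fun ξ hξ => hξ.trans (by ring))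
  simp_rw [hinner]
  obtain ⟨hsum, hbounds⟩ :=
    hh.tsum_norm_sq_bounds (hp.le.trans hh.le) (fun j => (hmeas j).aemeasurable) hg
  exact tsum_prod_bounds_of_fiberwise hm hp (sq_nonneg _) (fun _ => sq_nonneg _) hsum hbounds
    (fun _ _ => sq_nonneg _) (fun j => (hframe j).summable hm (hgS j))
    (fun j => (hframe j).2 _ (hgS j))

/-- Proposition: if `{S_j}` covers `ℝ^d`, `{h_j}` is an RPU associated to `{S_j}` with
bounds `p,P`, and `{μ(S_j)^{-1/2} e_{x_{j,k}} χ_{S_j}}_k` is a frame for `K_{S_j}` with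
bounds `m_j,M_j`, `m = inf m_j > 0`, `M = sup M_j < ∞`, then
`{μ(S_j)^{-1/2} h_j e_{x_{j,k}}}` is a frame for `L²(ℝ^d)` with bounds `mp, MP`. -/
theorem stmt14 {d : ℕ} {J K : Type*} [Countable J] [Countable K]
    (S : J → Set (Rd d)) (hSm : ∀ j, MeasurableSet (S j))
    (hSpos : ∀ j, 0 < volume (S j)) (hSfin : ∀ j, volume (S j) < ⊤)
    (hcover : (⋃ j, S j) = Set.univ)
    (h : J → Rd d → ℂ) (hmeas : ∀ j, Measurable (h j))
    (hsupp : ∀ j, Function.support (h j) ⊆ S j)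
    (p P m M : ℝ) (hp : 0 < p) (hm : 0 < m)
    (hRPU : ∀ᵐ ξ ∂(volume : Measure (Rd d)),
      p ≤ ∑' j, ‖h j ξ‖ ^ 2 ∧ (∑' j, ‖h j ξ‖ ^ 2) ≤ P)
    (x : J → K → Rd d) (mj Mj : J → ℝ)
    (hmj : ∀ j, m ≤ mj j) (hMj : ∀ j, Mj j ≤ M)
    (E : J → K → L2 d)
    (hE : ∀ j k, ∀ᵐ ξ ∂(volume : Measure (Rd d)),
      E j k ξ = if ξ ∈ S j then
        ((Real.sqrt (volume (S j)).toReal)⁻¹ : ℂ) *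
          Complex.exp (-2 * Real.pi * Complex.I * ((∑ i, x j k i * ξ i : ℝ) : ℂ))
        else 0)
    (hEframe : ∀ j, IsFrameWith (E j) (Ksp (S j)) (mj j) (Mj j))
    (G : J × K → L2 d)
    (hG : ∀ j k, ∀ᵐ ξ ∂(volume : Measure (Rd d)),
      G (j, k) ξ = ((Real.sqrt (volume (S j)).toReal)⁻¹ : ℂ) * h j ξ *
        Complex.exp (-2 * Real.pi * Complex.I * ((∑ i, x j k i * ξ i : ℝ) : ℂ))) :
    IsFrameWith G (Set.univ : Set (L2 d)) (m * p) (M * P) :=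
  stmt14_general S h hmeas hsupp p P m M hp hm hRPU x mj Mj hmj hMj E hE hEframe G hG
end
end
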